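/- arXiv:1602.03555 — 2 statements merged into one kernel-verified Lean document; each statement's English description precedes it below -/
import Mathlib

section
/- Σ_{ab ≤ N} d(a) = (1/2) · N · (log N)² + O(N log N), where the sum is over all pairs of positive integers (a,b) with ab ≤ N and d(n) denotes the number of positive divisors of n. -/
/-!
Summing over `a` first, the sum is `∑_{b ≤ N} D(⌊N/b⌋)` with `D(M) = ∑_{n ≤ M} d(n)`.
Counting multiples, `D(M) = ∑_{d ≤ M} ⌊M/d⌋ = M H_M + O(M)`, so `D(⌊t⌋) = t log t + O(t)`, and the
sum is `N ∑_{b ≤ N} log(N/b)/b + O(N log N)`. The identity `2 ∑_{k ≤ n} H_k/k = H_n² + ∑_{k ≤ n} 1/k²`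
together with `H_k = log k + O(1)` gives `∑_{b ≤ N} log(N/b)/b = (log N)²/2 + O(log N)`.
-/

open Finset Real

theorem sum_filter_mul_le_eq_sum_sum_Icc_div {M : Type*} [AddCommMonoid M] (f : ℕ → M) (N : ℕ) :
    ∑ p ∈ (Icc 1 N ×ˢ Icc 1 N).filter (fun p => p.1 * p.2 ≤ N), f p.1 =
      ∑ b ∈ Icc 1 N, ∑ a ∈ Icc 1 (N / b), f a := by
  rw [sum_filter, sum_product_right]
  refine sum_congr rfl fun b hb => ?_
  have hb : 0 < b := (mem_Icc.mp hb).1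
  rw [← sum_filter]
  congr 1
  ext a
  simp only [mem_filter, mem_Icc, Nat.le_div_iff_mul_le hb]
  constructor
  · rintro ⟨⟨h1, -⟩, h⟩; exact ⟨h1, h⟩
  · rintro ⟨h1, h⟩; exact ⟨⟨h1, le_trans (Nat.le_mul_of_pos_right a hb) h⟩, h⟩

namespace Nat

theorem sum_Icc_card_divisors_eq_sum_div (M : ℕ) :
    ∑ n ∈ Icc 1 M, #n.divisors = ∑ d ∈ Icc 1 M, M / d := by
  have hdiv : ∀ n ∈ Icc 1 M, n.divisors = (Icc 1 M).bipartiteBelow (· ∣ ·) n := by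
    intro n hn
    obtain ⟨hn1, hnM⟩ := mem_Icc.mp hn
    ext d
    simp only [Nat.mem_divisors, mem_bipartiteBelow, mem_Icc]
    constructor
    · rintro ⟨hd, -⟩
      exact ⟨⟨Nat.pos_of_dvd_of_pos hd hn1, (Nat.le_of_dvd hn1 hd).trans hnM⟩, hd⟩
    · rintro ⟨-, hd⟩; exact ⟨hd, by omega⟩
  rw [sum_congr rfl fun n hn => congrArg card (hdiv n hn),
    ← sum_card_bipartiteAbove_eq_sum_card_bipartiteBelow]
  refine sum_congr rfl fun d _ => ?_
  rw [← Nat.Ioc_filter_dvd_card_eq_div, ← Finset.Icc_add_one_left_eq_Ioc]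
  rfl

theorem mul_harmonic_eq_sum_Icc_div (M : ℕ) :
    (M : ℝ) * harmonic M = ∑ d ∈ Icc 1 M, (M : ℝ) / d := by
  simp [harmonic_eq_sum_Icc, mul_sum, div_eq_mul_inv]

theorem sum_Icc_div_le_mul_harmonic (M : ℕ) :
    ∑ d ∈ Icc 1 M, ((M / d : ℕ) : ℝ) ≤ M * harmonic M := by
  rw [mul_harmonic_eq_sum_Icc_div]
  exact sum_le_sum fun d _ => Nat.cast_div_le

theorem mul_harmonic_sub_le_sum_Icc_div (M : ℕ) :
    (M : ℝ) * harmonic M - M ≤ ∑ d ∈ Icc 1 M, ((M / d : ℕ) : ℝ) := by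
  have h : ∑ d ∈ Icc 1 M, ((M : ℝ) / d - 1) ≤ ∑ d ∈ Icc 1 M, ((M / d : ℕ) : ℝ) :=
    sum_le_sum fun d _ => by
      rw [← Nat.floor_div_eq_div (K := ℝ)]
      exact (Nat.sub_one_lt_floor _).le
  simpa [mul_harmonic_eq_sum_Icc_div] using h

end Nat

theorem abs_sum_card_divisors_floor_sub_mul_log_le {t : ℝ} (ht : 1 ≤ t) :
    |∑ n ∈ Icc 1 ⌊t⌋₊, (#n.divisors : ℝ) - t * log t| ≤ t + log t := by
  have hsum : ∑ n ∈ Icc 1 ⌊t⌋₊, (#n.divisors : ℝ) = ∑ d ∈ Icc 1 ⌊t⌋₊, ((⌊t⌋₊ / d : ℕ) : ℝ) := by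
    exact_mod_cast Nat.sum_Icc_card_divisors_eq_sum_div ⌊t⌋₊
  have hlow := Nat.mul_harmonic_sub_le_sum_Icc_div ⌊t⌋₊
  have hupp := Nat.sum_Icc_div_le_mul_harmonic ⌊t⌋₊
  have hlogH := log_le_harmonic_floor t (by linarith)
  have hHlog := harmonic_floor_le_one_add_log t ht
  have hfloor_le : (⌊t⌋₊ : ℝ) ≤ t := Nat.floor_le (by linarith)
  have hlt_floor : t - 1 < ⌊t⌋₊ := Nat.sub_one_lt_floor t
  have hlog : 0 ≤ log t := log_nonneg ht
  rw [hsum, abs_le]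
  constructor <;> nlinarith

theorem two_mul_sum_Icc_harmonic_div_eq (n : ℕ) :
    2 * ∑ k ∈ Icc 1 n, harmonic k / k = harmonic n ^ 2 + ∑ k ∈ Icc 1 n, ((k : ℚ) ^ 2)⁻¹ := by
  induction n with
  | zero => simp
  | succ n ih =>
    rw [sum_Icc_succ_top (by omega), sum_Icc_succ_top (by omega), mul_add, ih, harmonic_succ]
    push_cast
    field_simp
    ring

theorem abs_sum_log_div_div_sub_le (N : ℕ) :
    |∑ b ∈ Icc 1 N, log (N / b) / b - log N ^ 2 / 2| ≤ log N + 2 := by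
  set H : ℝ := (harmonic N : ℝ) with hH
  have hinv : ∑ b ∈ Icc 1 N, (b : ℝ)⁻¹ = H := by simp [hH, harmonic_eq_sum_Icc]
  have hsplit : ∑ b ∈ Icc 1 N, log (N / b) / b = log N * H - ∑ b ∈ Icc 1 N, log b / b := by
    rw [← hinv, mul_sum, ← sum_sub_distrib]
    refine sum_congr rfl fun b hb => ?_
    obtain ⟨hb, hbN⟩ := mem_Icc.mp hb
    rw [log_div (by exact_mod_cast (by omega : N ≠ 0)) (by exact_mod_cast (by omega : b ≠ 0))]
    ring
  have hlogH : log N ≤ H := by simpa using log_le_harmonic_floor (N : ℝ) (by positivity)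
  have hHlog : H ≤ 1 + log N := harmonic_le_one_add_log N
  have hsq : 2 * ∑ b ∈ Icc 1 N, (harmonic b : ℝ) / b
      = H ^ 2 + ∑ b ∈ Icc 1 N, ((b : ℝ) ^ 2)⁻¹ := by
    have := congrArg ((↑) : ℚ → ℝ) (two_mul_sum_Icc_harmonic_div_eq N)
    push_cast at this
    exact this
  have hsq_nonneg : 0 ≤ ∑ b ∈ Icc 1 N, ((b : ℝ) ^ 2)⁻¹ := sum_nonneg fun _ _ => by positivity
  have hsq_le : ∑ b ∈ Icc 1 N, ((b : ℝ) ^ 2)⁻¹ ≤ H := by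
    rw [← hinv]
    refine sum_le_sum fun b hb => ?_
    have hb : (1 : ℝ) ≤ b := by exact_mod_cast (mem_Icc.mp hb).1
    exact inv_anti₀ (by positivity) (by nlinarith)
  have hlog_le : ∑ b ∈ Icc 1 N, log b / b ≤ ∑ b ∈ Icc 1 N, (harmonic b : ℝ) / b := by
    refine sum_le_sum fun b hb => div_le_div_of_nonneg_right ?_ (by positivity)
    simpa using log_le_harmonic_floor (b : ℝ) (by positivity)
  have hlog_ge : ∑ b ∈ Icc 1 N, (harmonic b : ℝ) / b - H ≤ ∑ b ∈ Icc 1 N, log b / b := by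
    rw [← hinv, ← sum_sub_distrib]
    refine sum_le_sum fun b hb => ?_
    rw [inv_eq_one_div, ← sub_div]
    exact div_le_div_of_nonneg_right (by linarith [harmonic_le_one_add_log b]) (by positivity)
  rw [hsplit, abs_le]
  constructor <;> nlinarith

theorem abs_sum_sum_card_divisors_sub_le (N : ℕ) :
    |∑ b ∈ Icc 1 N, ∑ a ∈ Icc 1 (N / b), (#a.divisors : ℝ)
      - N * ∑ b ∈ Icc 1 N, log (N / b) / b| ≤ N * (1 + 2 * log N) := by
  have hterm : ∀ b ∈ Icc 1 N, |∑ a ∈ Icc 1 (N / b), (#a.divisors : ℝ)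
      - N / b * log (N / b)| ≤ N / b + log N := by
    intro b hb
    obtain ⟨hb, hbN⟩ := mem_Icc.mp hb
    have hb' : (0 : ℝ) < b := by exact_mod_cast hb
    have ht : 1 ≤ (N : ℝ) / b := by rw [one_le_div hb']; exact_mod_cast hbN
    have hlog : log (N / b) ≤ log N :=
      log_le_log (by positivity) (div_le_self (by positivity) (by exact_mod_cast hb))
    have h := abs_sum_card_divisors_floor_sub_mul_log_le ht
    rw [Nat.floor_div_eq_div] at h
    linarith
  calc _ = |∑ b ∈ Icc 1 N, (∑ a ∈ Icc 1 (N / b), (#a.divisors : ℝ) - N / b * log (N / b))| := by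
        rw [sum_sub_distrib, mul_sum]
        congr 2
        exact sum_congr rfl fun b _ => by ring
    _ ≤ ∑ b ∈ Icc 1 N, ((N : ℝ) / b + log N) := (abs_sum_le_sum_abs _ _).trans (sum_le_sum hterm)
    _ = N * harmonic N + N * log N := by simp [sum_add_distrib, Nat.mul_harmonic_eq_sum_Icc_div]
    _ ≤ N * (1 + 2 * log N) := by
        have := harmonic_le_one_add_log N
        have hN : (0 : ℝ) ≤ N := by positivity
        nlinarith

theorem sum_divisors_over_pairs_asymptotic :
    ∃ C : ℝ, C > 0 ∧ ∀ᶠ N : ℕ in Filter.atTop,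
      |(∑ p ∈ (Finset.Icc 1 N ×ˢ Finset.Icc 1 N).filter (fun p => p.1 * p.2 ≤ N),
          (p.1.divisors.card : ℝ))
        - (1 / 2) * N * (Real.log N) ^ 2|
        ≤ C * N * Real.log N := by
  refine ⟨6, by norm_num, ?_⟩
  filter_upwards [Filter.eventually_ge_atTop 3] with N hN
  have hN0 : (0 : ℝ) ≤ N := by positivity
  have hlog : 1 ≤ log N := by
    rw [le_log_iff_exp_le (by positivity)]
    exact exp_one_lt_three.le.trans (by exact_mod_cast hN)
  have hcount := abs_sum_sum_card_divisors_sub_le N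
  have hmain := abs_sum_log_div_div_sub_le N
  set S := ∑ b ∈ Icc 1 N, log (N / b) / b
  rw [sum_filter_mul_le_eq_sum_sum_Icc_div (fun a => (#a.divisors : ℝ))]
  calc _ ≤ _ := abs_sub_le _ (N * S) _
    _ ≤ N * (1 + 2 * log N) + N * (log N + 2) := by
        rw [show N * S - 1 / 2 * N * log N ^ 2 = N * (S - log N ^ 2 / 2) by ring, abs_mul,
          abs_of_nonneg hN0]
        gcongr
    _ ≤ 6 * N * log N := by nlinarith [mul_nonneg hN0 (sub_nonneg.2 hlog)]
end

section
/- Let A(N) be the number of triples (a,b,r) of positive integers with r ∣ ab, ab ≤ N, and r dividing at least one of a and b. Then A(N) = N (log N)² + O(N log N); that is, there is a constant C > 0 such that |A(N) − N (log N)²| ≤ C · N log N for all sufficiently large N. -/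
/-- `A N` counts triples `(a, b, r)` of positive integers with `a * b ≤ N`, `r ∣ a * b`,
and `r` dividing at least one of `a` and `b`. -/
def tripleCountA (N : ℕ) : ℕ :=
  ((Finset.Icc 1 N ×ˢ Finset.Icc 1 N ×ˢ Finset.Icc 1 N).filter
    (fun t => t.1 * t.2.1 ≤ N ∧ t.2.2 ∣ t.1 * t.2.1 ∧ (t.2.2 ∣ t.1 ∨ t.2.2 ∣ t.2.1))).card

/-!
Write `S_a` (resp. `S_b`) for the triples with `a * b ≤ N` and `r ∣ a` (resp. `r ∣ b`), so that
`A(N) = #(S_a ∪ S_b)`. Writing `a = r x` shows that `S_a` (and symmetrically `S_b`) is in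
bijection with the triples `r * x * b ≤ N`, whose number we call `D₃(N)`; writing also `b = r y`
shows that `S_a ∩ S_b` is in bijection with the `G(N)` triples `r² * x * y ≤ N`. Hence
`A(N) = 2 D₃(N) - G(N)`. Fixing `r` reduces both counts to the divisor summatory function
`D(n) = ∑_{s ≤ n} ⌊n / s⌋ = n log n + O(n)`, which gives `G(N) = O(N log N)` and
`D₃(N) = N (L H_N - ∑_{r ≤ N} log r / r) + O(N log N)` with `L = log N`. Finally
`∑_{r ≤ N} H_r / r = (H_N² + ∑_{r ≤ N} 1 / r²) / 2` and `log r ≤ H_r ≤ 1 + log r` give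
`∑_{r ≤ N} log r / r = H_N² / 2 + O(H_N)`, and `H_N = L + O(1)`.
-/

open Finset Real

def cube (N : ℕ) : Finset (ℕ × ℕ × ℕ) := Icc 1 N ×ˢ Icc 1 N ×ˢ Icc 1 N

def divisorSummatory (n : ℕ) : ℕ := ∑ s ∈ Icc 1 n, n / s

lemma card_filter_Icc_mul_le {m : ℕ} (hm : 0 < m) (N : ℕ) :
    #{t ∈ Icc 1 N | m * t ≤ N} = N / m := by
  have : {t ∈ Icc 1 N | m * t ≤ N} = Icc 1 (N / m) := by
    ext t
    simp only [mem_filter, mem_Icc, Nat.le_div_iff_mul_le hm, mul_comm t m]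
    constructor
    · rintro ⟨⟨ht, -⟩, h⟩
      exact ⟨ht, h⟩
    · rintro ⟨ht, h⟩
      exact ⟨⟨ht, le_trans (Nat.le_mul_of_pos_left t hm) h⟩, h⟩
  rw [this, Nat.card_Icc, Nat.add_sub_cancel]

lemma card_filter_cube_mul_le (w : ℕ → ℕ → ℕ) (hw : ∀ r s, 0 < r → 0 < s → 0 < w r s)
    (N : ℕ) :
    #{t ∈ cube N | w t.1 t.2.1 * t.2.2 ≤ N} = ∑ r ∈ Icc 1 N, ∑ s ∈ Icc 1 N, N / w r s := by
  rw [cube, card_filter, sum_product]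
  refine sum_congr rfl fun r hr => ?_
  rw [sum_product]
  refine sum_congr rfl fun s hs => ?_
  rw [← card_filter]
  exact card_filter_Icc_mul_le (hw r s (mem_Icc.1 hr).1 (mem_Icc.1 hs).1) N

lemma sum_Icc_div_eq_divisorSummatory {M N : ℕ} (h : M ≤ N) :
    ∑ s ∈ Icc 1 N, M / s = divisorSummatory M := by
  refine (sum_subset (Icc_subset_Icc_right h) fun s hs hsM => ?_).symm
  simp only [mem_Icc, not_and, not_le] at hs hsM
  exact Nat.div_eq_of_lt (hsM hs.1)

lemma card_filter_cube_mul_mul_le (N : ℕ) :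
    #{t ∈ cube N | t.1 * t.2.1 * t.2.2 ≤ N} = ∑ r ∈ Icc 1 N, divisorSummatory (N / r) := by
  rw [card_filter_cube_mul_le (· * ·) (fun _ _ => Nat.mul_pos)]
  refine sum_congr rfl fun r _ => ?_
  simp_rw [← Nat.div_div_eq_div_mul]
  exact sum_Icc_div_eq_divisorSummatory (Nat.div_le_self N r)

lemma card_filter_cube_sq_mul_mul_le (N : ℕ) :
    #{t ∈ cube N | t.1 * t.1 * t.2.1 * t.2.2 ≤ N} =
      ∑ r ∈ Icc 1 N, divisorSummatory (N / (r * r)) := by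
  rw [card_filter_cube_mul_le (fun r s => r * r * s)
    (fun _ _ hr hs => Nat.mul_pos (Nat.mul_pos hr hr) hs)]
  refine sum_congr rfl fun r _ => ?_
  simp_rw [← Nat.div_div_eq_div_mul N (r * r)]
  exact sum_Icc_div_eq_divisorSummatory (Nat.div_le_self N _)

lemma card_filter_cube_mul_mul_le_eq_dvd_left (N : ℕ) :
    #{t ∈ cube N | t.1 * t.2.1 * t.2.2 ≤ N} =
      #{t ∈ cube N | t.1 * t.2.1 ≤ N ∧ t.2.2 ∣ t.1} := by
  refine card_nbij (fun t => (t.1 * t.2.1, t.2.2, t.1)) ?_ ?_ ?_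
  · rintro ⟨x, y, z⟩ h
    simp only [cube, mem_coe, mem_filter, mem_product, mem_Icc] at h ⊢
    obtain ⟨⟨⟨hx, -⟩, ⟨hy, -⟩, hz, hzN⟩, h⟩ := h
    have hxy : x * y ≤ N := le_trans (Nat.le_mul_of_pos_right _ hz) h
    exact ⟨⟨⟨Nat.mul_pos hx hy, hxy⟩, ⟨hz, hzN⟩, hx, le_trans (Nat.le_mul_of_pos_right _ hy) hxy⟩,
      h, dvd_mul_right x y⟩
  · rintro ⟨x, y, z⟩ h ⟨x', y', z'⟩ - he
    simp only [cube, mem_coe, mem_filter, mem_product, mem_Icc, Prod.mk.injEq] at h he ⊢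
    obtain ⟨hxy, rfl, rfl⟩ := he
    exact ⟨rfl, Nat.eq_of_mul_eq_mul_left (by omega) hxy, rfl⟩
  · rintro ⟨a, b, r⟩ h
    simp only [cube, mem_coe, mem_filter, mem_product, mem_Icc] at h
    obtain ⟨⟨⟨ha, haN⟩, ⟨hb, hbN⟩, hr, hrN⟩, hab, k, rfl⟩ := h
    have hk : 0 < k := Nat.pos_of_mul_pos_left ha
    refine ⟨(r, k, b), ?_, rfl⟩
    simp only [cube, mem_coe, mem_filter, mem_product, mem_Icc]
    exact ⟨⟨⟨hr, hrN⟩, ⟨hk, le_trans (Nat.le_mul_of_pos_left k hr) haN⟩, hb, hbN⟩, hab⟩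

lemma card_filter_cube_dvd_right_eq_dvd_left (N : ℕ) :
    #{t ∈ cube N | t.1 * t.2.1 ≤ N ∧ t.2.2 ∣ t.2.1} =
      #{t ∈ cube N | t.1 * t.2.1 ≤ N ∧ t.2.2 ∣ t.1} := by
  refine card_nbij' (fun t => (t.2.1, t.1, t.2.2)) (fun t => (t.2.1, t.1, t.2.2))
    ?_ ?_ (fun _ _ => rfl) (fun _ _ => rfl) <;>
  · rintro ⟨a, b, r⟩ h
    simp only [cube, mem_coe, mem_filter, mem_product, mem_Icc] at h ⊢
    rw [mul_comm]
    tauto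

lemma card_filter_cube_sq_mul_mul_le_eq_dvd_dvd (N : ℕ) :
    #{t ∈ cube N | t.1 * t.1 * t.2.1 * t.2.2 ≤ N} =
      #{t ∈ cube N | (t.1 * t.2.1 ≤ N ∧ t.2.2 ∣ t.1) ∧ (t.1 * t.2.1 ≤ N ∧ t.2.2 ∣ t.2.1)} := by
  refine card_nbij (fun t => (t.1 * t.2.1, t.1 * t.2.2, t.1)) ?_ ?_ ?_
  · rintro ⟨x, y, z⟩ h
    simp only [cube, mem_coe, mem_filter, mem_product, mem_Icc] at h ⊢
    obtain ⟨⟨⟨hx, -⟩, ⟨hy, -⟩, hz, -⟩, h⟩ := h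
    have hprod : x * y * (x * z) ≤ N := by
      calc x * y * (x * z) = x * x * y * z := by ring
        _ ≤ N := h
    have hxy : x * y ≤ N := le_trans (Nat.le_mul_of_pos_right _ (Nat.mul_pos hx hz)) hprod
    have hxz : x * z ≤ N := le_trans (Nat.le_mul_of_pos_left _ (Nat.mul_pos hx hy)) hprod
    exact ⟨⟨⟨Nat.mul_pos hx hy, hxy⟩, ⟨Nat.mul_pos hx hz, hxz⟩, hx,
      le_trans (Nat.le_mul_of_pos_right _ hy) hxy⟩, ⟨hprod, dvd_mul_right x y⟩, hprod,
      dvd_mul_right x z⟩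
  · rintro ⟨x, y, z⟩ h ⟨x', y', z'⟩ - he
    simp only [cube, mem_coe, mem_filter, mem_product, mem_Icc, Prod.mk.injEq] at h he ⊢
    obtain ⟨hxy, hxz, rfl⟩ := he
    exact ⟨rfl, Nat.eq_of_mul_eq_mul_left (by omega) hxy, Nat.eq_of_mul_eq_mul_left (by omega) hxz⟩
  · rintro ⟨a, b, r⟩ h
    simp only [cube, mem_coe, mem_filter, mem_product, mem_Icc] at h
    obtain ⟨⟨⟨ha, haN⟩, ⟨hb, hbN⟩, hr, hrN⟩, ⟨hab, k, rfl⟩, -, l, rfl⟩ := h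
    have hk : 0 < k := Nat.pos_of_mul_pos_left ha
    have hl : 0 < l := Nat.pos_of_mul_pos_left hb
    refine ⟨(r, k, l), ?_, rfl⟩
    simp only [cube, mem_coe, mem_filter, mem_product, mem_Icc]
    refine ⟨⟨⟨hr, hrN⟩, ⟨hk, le_trans (Nat.le_mul_of_pos_left k hr) haN⟩, hl,
      le_trans (Nat.le_mul_of_pos_left l hr) hbN⟩, ?_⟩
    calc r * r * k * l = r * k * (r * l) := by ring
      _ ≤ N := hab

lemma tripleCountA_add_card_filter_cube_sq_mul_mul_le (N : ℕ) :
    tripleCountA N + #{t ∈ cube N | t.1 * t.1 * t.2.1 * t.2.2 ≤ N} =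
      2 * #{t ∈ cube N | t.1 * t.2.1 * t.2.2 ≤ N} := by
  have hA : tripleCountA N = #{t ∈ cube N | (t.1 * t.2.1 ≤ N ∧ t.2.2 ∣ t.1) ∨
      (t.1 * t.2.1 ≤ N ∧ t.2.2 ∣ t.2.1)} := by
    refine congrArg card (filter_congr fun t _ => ?_)
    constructor
    · rintro ⟨hab, -, h | h⟩
      exacts [Or.inl ⟨hab, h⟩, Or.inr ⟨hab, h⟩]
    · rintro (⟨hab, h⟩ | ⟨hab, h⟩)
      exacts [⟨hab, h.mul_right _, Or.inl h⟩, ⟨hab, h.mul_left _, Or.inr h⟩]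
  rw [hA, filter_or, card_filter_cube_sq_mul_mul_le_eq_dvd_dvd,
    filter_and (fun t : ℕ × ℕ × ℕ => t.1 * t.2.1 ≤ N ∧ t.2.2 ∣ t.1),
    card_union_add_card_inter, card_filter_cube_dvd_right_eq_dvd_left,
    card_filter_cube_mul_mul_le_eq_dvd_left, two_mul]

lemma harmonic_mono : Monotone harmonic := fun _ _ h =>
  sum_le_sum_of_subset_of_nonneg (range_subset_range.2 h) fun _ _ _ => by positivity

lemma cast_harmonic_eq_sum_Icc (n : ℕ) : (harmonic n : ℝ) = ∑ r ∈ Icc 1 n, (r : ℝ)⁻¹ := by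
  simp [harmonic_eq_sum_Icc]

lemma log_le_harmonic (n : ℕ) : log n ≤ harmonic n := by
  simpa using log_le_harmonic_floor (n : ℝ) n.cast_nonneg

lemma harmonic_nonneg (n : ℕ) : (0 : ℝ) ≤ harmonic n :=
  (log_natCast_nonneg n).trans (log_le_harmonic n)

lemma two_mul_sum_harmonic_div (n : ℕ) :
    2 * ∑ r ∈ Icc 1 n, harmonic r / r = harmonic n ^ 2 + ∑ r ∈ Icc 1 n, ((r : ℚ) ^ 2)⁻¹ := by
  induction n with
  | zero => simp
  | succ n ih =>
    rw [sum_Icc_succ_top (by omega), sum_Icc_succ_top (by omega), harmonic_succ]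
    linear_combination ih

lemma abs_sum_log_div_sub_harmonic_sq_le (n : ℕ) :
    |∑ r ∈ Icc 1 n, log r / r - (harmonic n : ℝ) ^ 2 / 2| ≤ (harmonic n : ℝ) := by
  have hS : 2 * ∑ r ∈ Icc 1 n, (harmonic r : ℝ) / r =
      (harmonic n : ℝ) ^ 2 + ∑ r ∈ Icc 1 n, ((r : ℝ) ^ 2)⁻¹ := by
    simpa using congrArg (Rat.cast (K := ℝ)) (two_mul_sum_harmonic_div n)
  have hsq : ∑ r ∈ Icc 1 n, ((r : ℝ) ^ 2)⁻¹ ≤ harmonic n := by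
    rw [cast_harmonic_eq_sum_Icc]
    refine sum_le_sum fun r hr => ?_
    have : (1 : ℝ) ≤ r := by exact_mod_cast (mem_Icc.1 hr).1
    exact inv_anti₀ (by positivity) (by nlinarith)
  have hlog : ∑ r ∈ Icc 1 n, log r / r ≤ ∑ r ∈ Icc 1 n, (harmonic r : ℝ) / r :=
    sum_le_sum fun r _ => div_le_div_of_nonneg_right (log_le_harmonic r) r.cast_nonneg
  have hharm : ∑ r ∈ Icc 1 n, (harmonic r : ℝ) / r ≤ ∑ r ∈ Icc 1 n, log r / r + harmonic n := by
    rw [cast_harmonic_eq_sum_Icc, ← sum_add_distrib]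
    refine sum_le_sum fun r _ => ?_
    rw [div_eq_mul_inv, div_eq_mul_inv, ← add_one_mul]
    exact mul_le_mul_of_nonneg_right (by linarith [harmonic_le_one_add_log r]) (by positivity)
  rw [abs_le]
  constructor <;> nlinarith [sum_nonneg fun r (_ : r ∈ Icc 1 n) => inv_nonneg.2 (sq_nonneg (r : ℝ))]

lemma divisorSummatory_le (n : ℕ) : (divisorSummatory n : ℝ) ≤ n * harmonic n := by
  rw [divisorSummatory, cast_harmonic_eq_sum_Icc, mul_sum]
  push_cast
  exact sum_le_sum fun s _ => (Nat.cast_div_le).trans_eq (div_eq_mul_inv _ _)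

lemma le_divisorSummatory (n : ℕ) : n * harmonic n - n ≤ (divisorSummatory n : ℝ) := by
  have hsum : (n : ℝ) * harmonic n - n = ∑ s ∈ Icc 1 n, ((n : ℝ) / s - 1) := by
    simp [sum_sub_distrib, cast_harmonic_eq_sum_Icc, mul_sum, div_eq_mul_inv]
  rw [hsum, divisorSummatory]
  push_cast
  refine sum_le_sum fun s _ => ?_
  rw [← Nat.floor_div_eq_div (K := ℝ)]
  exact (Nat.sub_one_lt_floor _).le

lemma abs_divisorSummatory_floor_sub_le {y : ℝ} (hy : 1 ≤ y) :
    |(divisorSummatory ⌊y⌋₊ : ℝ) - y * log y| ≤ y + log y := by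
  have hlog : 0 ≤ log y := log_nonneg hy
  have hfloor : y - 1 ≤ ⌊y⌋₊ := (Nat.sub_one_lt_floor y).le
  have hfloor' : (⌊y⌋₊ : ℝ) ≤ y := Nat.floor_le (by linarith)
  have hH : log y ≤ harmonic ⌊y⌋₊ := log_le_harmonic_floor y (by linarith)
  have hH' : (harmonic ⌊y⌋₊ : ℝ) ≤ 1 + log y := harmonic_floor_le_one_add_log y hy
  have hup := divisorSummatory_le ⌊y⌋₊
  have hlow := le_divisorSummatory ⌊y⌋₊
  rw [abs_le]
  constructor <;> nlinarith

lemma abs_divisorSummatory_div_sub_le {N r : ℕ} (hr : 1 ≤ r) (hrN : r ≤ N) :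
    |(divisorSummatory (N / r) : ℝ) - N / r * (log N - log r)| ≤ N / r + log N := by
  have hr' : (0 : ℝ) < r := by exact_mod_cast hr
  have hN : (0 : ℝ) < N := by exact_mod_cast hr.trans hrN
  have hy : (1 : ℝ) ≤ N / r := by rw [one_le_div hr']; exact_mod_cast hrN
  have hyN : (N : ℝ) / r ≤ N := div_le_self (by positivity) (by exact_mod_cast hr)
  have := abs_divisorSummatory_floor_sub_le hy
  rw [Nat.floor_div_eq_div, log_div hN.ne' hr'.ne'] at this
  linarith [log_le_log (by linarith) hyN, log_div hN.ne' hr'.ne']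

lemma abs_sum_divisorSummatory_div_sub_le (N : ℕ) :
    |(∑ r ∈ Icc 1 N, divisorSummatory (N / r) : ℝ) - N * log N ^ 2 / 2| ≤
      N * (3 * log N + 3) := by
  have hΛ := abs_sum_log_div_sub_harmonic_sq_le N
  have hHsum := cast_harmonic_eq_sum_Icc N
  set L := log N
  set H : ℝ := (harmonic N : ℝ)
  set Λ := ∑ r ∈ Icc 1 N, log r / r
  have hLH : L ≤ H := log_le_harmonic N
  have hHL : H ≤ 1 + L := harmonic_le_one_add_log N
  have hmain : ∑ r ∈ Icc 1 N, (N : ℝ) / r * (L - log r) = N * (L * H - Λ) := by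
    rw [hHsum, mul_sum, mul_sub, mul_sum, mul_sum, ← sum_sub_distrib]
    exact sum_congr rfl fun r _ => by ring
  have hrows : |(∑ r ∈ Icc 1 N, divisorSummatory (N / r) : ℝ) - N * (L * H - Λ)| ≤
      N * H + N * L := by
    rw [← hmain, ← sum_sub_distrib]
    calc _ ≤ ∑ r ∈ Icc 1 N, ((N : ℝ) / r + L) := (abs_sum_le_sum_abs _ _).trans <|
          sum_le_sum fun r hr => abs_divisorSummatory_div_sub_le (mem_Icc.1 hr).1 (mem_Icc.1 hr).2
      _ = N * H + N * L := by simp [sum_add_distrib, hHsum, mul_sum, div_eq_mul_inv]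
  -- `L H - L² / 2 = H² / 2 - (H - L)² / 2`, and `Λ` is within `H` of `H² / 2`
  have hquad : |N * (L * H - Λ) - N * L ^ 2 / 2| ≤ N * (H + 1 / 2) := by
    rw [show N * (L * H - Λ) - N * L ^ 2 / 2 = N * ((H ^ 2 / 2 - Λ) - (H - L) ^ 2 / 2) by ring,
      abs_mul, Nat.abs_cast]
    refine mul_le_mul_of_nonneg_left ((abs_sub _ _).trans ?_) (by positivity)
    rw [abs_sub_comm, abs_of_nonneg (by positivity : (0 : ℝ) ≤ (H - L) ^ 2 / 2)]
    nlinarith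
  calc _ ≤ N * H + N * L + N * (H + 1 / 2) := (abs_sub_le _ _ _).trans (add_le_add hrows hquad)
    _ ≤ N * (3 * L + 3) := by nlinarith [(N.cast_nonneg : (0 : ℝ) ≤ N)]

lemma sum_Icc_inv_sq_le_two (N : ℕ) : ∑ r ∈ Icc 1 N, ((r : ℝ) ^ 2)⁻¹ ≤ 2 := by
  have h : Icc 1 N = Ioo 0 (N + 1) := by ext; simp only [mem_Icc, mem_Ioo]; omega
  simpa [h] using sum_Ioo_inv_sq_le (α := ℝ) 0 (N + 1)

lemma sum_divisorSummatory_div_mul_self_le (N : ℕ) :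
    (∑ r ∈ Icc 1 N, divisorSummatory (N / (r * r)) : ℝ) ≤ 2 * N * harmonic N := by
  calc _ ≤ ∑ r ∈ Icc 1 N, N * harmonic N * ((r : ℝ) ^ 2)⁻¹ := sum_le_sum fun r _ => by
        refine (divisorSummatory_le _).trans ?_
        have hM : ((N / (r * r) : ℕ) : ℝ) ≤ N * ((r : ℝ) ^ 2)⁻¹ := by
          simpa [sq, div_eq_mul_inv] using Nat.cast_div_le (α := ℝ) (m := N) (n := r * r)
        have hH : (harmonic (N / (r * r)) : ℝ) ≤ harmonic N :=
          by exact_mod_cast harmonic_mono (Nat.div_le_self N _)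
        nlinarith [harmonic_nonneg (N / (r * r)), (N / (r * r)).cast_nonneg (α := ℝ)]
    _ ≤ N * harmonic N * 2 := by
        rw [← mul_sum]
        exact mul_le_mul_of_nonneg_left (sum_Icc_inv_sq_le_two N)
          (mul_nonneg N.cast_nonneg (harmonic_nonneg N))
    _ = 2 * N * harmonic N := by ring

theorem tripleCountA_asymptotic :
    ∃ C : ℝ, C > 0 ∧ ∀ᶠ N : ℕ in Filter.atTop,
      |(tripleCountA N : ℝ) - N * (Real.log N) ^ 2| ≤ C * N * Real.log N := by
  refine ⟨16, by norm_num, ?_⟩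
  filter_upwards [(tendsto_log_atTop.comp tendsto_natCast_atTop_atTop).eventually_ge_atTop 1]
    with N (hL : 1 ≤ log N)
  have hA := tripleCountA_add_card_filter_cube_sq_mul_mul_le N
  rw [card_filter_cube_sq_mul_mul_le, card_filter_cube_mul_mul_le] at hA
  have hA' : (tripleCountA N : ℝ) = 2 * ∑ r ∈ Icc 1 N, (divisorSummatory (N / r) : ℝ) -
      ∑ r ∈ Icc 1 N, (divisorSummatory (N / (r * r)) : ℝ) := by
    rw [eq_sub_iff_add_eq]
    exact_mod_cast hA
  have hD₃ := abs_le.1 (abs_sum_divisorSummatory_div_sub_le N)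
  have hG := sum_divisorSummatory_div_mul_self_le N
  have hG₀ : 0 ≤ ∑ r ∈ Icc 1 N, (divisorSummatory (N / (r * r)) : ℝ) := by positivity
  have hH := harmonic_le_one_add_log N
  have hN : (0 : ℝ) ≤ N := N.cast_nonneg
  rw [hA', abs_le]
  constructor <;> nlinarith [mul_le_mul_of_nonneg_left hL hN, mul_le_mul_of_nonneg_left hH hN]
end
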